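/- arXiv:1505.06465 — 2 statements merged into one kernel-verified Lean document; each statement's English description precedes it below -/
import Mathlib

section
/- If λ : (0,∞) → ℝ is differentiable, satisfies λ'(t) + λ(t)² - k² ≤ 0 for all t > 0 (with k > 0), and λ(t) ≤ 1/t + C near t = 0 (i.e., limsup_{t→0+} t·λ(t) ≤ 1), then λ(t) ≤ k·coth(k t) for all t > 0. -/
/-! For `a > 0` the function `k coth (k (t - a))` solves the Riccati equation `y' + y² = k²` on
`(a, ∞)` and blows up at `a`, where `λ` is still finite. Writing `s = sinh (k (t - a))` and
`c = cosh (k (t - a))`, the quantity `s (λ s - k c)` vanishes at `t = a` and its derivative is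
`(λ' + λ² - k²) s² - (λ s - k c)² ≤ 0`, so it stays nonpositive, i.e. `λ(t) ≤ k coth (k (t - a))`.
Letting `a → 0⁺` gives the bound. -/

open Filter Topology Real Set

noncomputable def riccatiDefect (f : ℝ → ℝ) (k a t : ℝ) : ℝ :=
  sinh (k * (t - a)) * (f t * sinh (k * (t - a)) - k * cosh (k * (t - a)))

lemma riccatiDefect_self (f : ℝ → ℝ) (k a : ℝ) : riccatiDefect f k a a = 0 := by
  simp [riccatiDefect]

lemma hasDerivAt_riccatiDefect {f : ℝ → ℝ} {f' k a t : ℝ} (hf : HasDerivAt f f' t) :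
    HasDerivAt (riccatiDefect f k a)
      ((f' + f t ^ 2 - k ^ 2) * sinh (k * (t - a)) ^ 2
        - (f t * sinh (k * (t - a)) - k * cosh (k * (t - a))) ^ 2) t := by
  have hlin : HasDerivAt (fun t => k * (t - a)) k t := by
    simpa using ((hasDerivAt_id t).sub_const a).const_mul k
  have hs := hlin.sinh
  have hc := hlin.cosh
  refine (hs.mul ((hf.mul hs).sub (hc.const_mul k))).congr_deriv ?_
  simp only [Pi.mul_apply, Pi.sub_apply]
  ring

lemma le_coth_of_riccati_le {f : ℝ → ℝ} {k a t : ℝ} (hk : 0 < k) (hat : a < t)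
    (hcont : ContinuousOn f (Icc a t)) (hdiff : ∀ x ∈ Ioo a t, DifferentiableAt ℝ f x)
    (hineq : ∀ x ∈ Ioo a t, deriv f x + f x ^ 2 - k ^ 2 ≤ 0) :
    f t ≤ k * cosh (k * (t - a)) / sinh (k * (t - a)) := by
  have hderiv (x : ℝ) (hx : x ∈ Ioo a t) := hasDerivAt_riccatiDefect (k := k) (a := a)
    (hdiff x hx).hasDerivAt
  have hanti : AntitoneOn (riccatiDefect f k a) (Icc a t) := by
    refine antitoneOn_of_deriv_nonpos (convex_Icc a t) ?_ ?_ ?_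
    · unfold riccatiDefect
      fun_prop
    · rw [interior_Icc]
      exact fun x hx => (hderiv x hx).differentiableAt.differentiableWithinAt
    · rw [interior_Icc]
      intro x hx
      rw [(hderiv x hx).deriv, sub_nonpos]
      exact (mul_nonpos_of_nonpos_of_nonneg (hineq x hx) (sq_nonneg _)).trans (sq_nonneg _)
  have hdefect : riccatiDefect f k a t ≤ 0 :=
    riccatiDefect_self f k a ▸ hanti (left_mem_Icc.2 hat.le) (right_mem_Icc.2 hat.le) hat.le
  have hs : 0 < sinh (k * (t - a)) := sinh_pos_iff.2 (mul_pos hk (sub_pos.2 hat))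
  rw [le_div_iff₀ hs]
  linarith [nonpos_of_mul_nonpos_right hdefect hs]

theorem gronwall_coth_general (k : ℝ) (hk : 0 < k) (lam : ℝ → ℝ)
    (hdiff : ∀ t ∈ Set.Ioi (0 : ℝ), DifferentiableAt ℝ lam t)
    (hineq : ∀ t ∈ Set.Ioi (0 : ℝ), deriv lam t + (lam t) ^ 2 - k ^ 2 ≤ 0) :
    ∀ t ∈ Set.Ioi (0 : ℝ), lam t ≤ k * Real.cosh (k * t) / Real.sinh (k * t) := by
  intro t ht
  have hshift : ∀ a ∈ Ioo 0 t, lam t ≤ k * cosh (k * (t - a)) / sinh (k * (t - a)) :=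
    fun a ha => le_coth_of_riccati_le hk ha.2
      (fun x hx => (hdiff x (ha.1.trans_le hx.1)).continuousAt.continuousWithinAt)
      (fun x hx => hdiff x (ha.1.trans hx.1)) (fun x hx => hineq x (ha.1.trans hx.1))
  have hlim : Tendsto (fun a => k * cosh (k * (t - a)) / sinh (k * (t - a))) (𝓝[>] 0)
      (𝓝 (k * cosh (k * t) / sinh (k * t))) := by
    have hs : sinh (k * (t - 0)) ≠ 0 := by
      simpa using (sinh_pos_iff.2 (mul_pos hk ht)).ne'
    have hcont : ContinuousAt (fun a => k * cosh (k * (t - a)) / sinh (k * (t - a))) 0 := by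
      fun_prop (disch := exact hs)
    simpa using hcont.tendsto.mono_left nhdsWithin_le_nhds
  exact ge_of_tendsto hlim (eventually_of_mem (Ioo_mem_nhdsGT ht) hshift)

/-- Gronwall-type comparison: if `λ' + λ² - k² ≤ 0` on `(0,∞)` and
`limsup_{t→0+} t·λ(t) ≤ 1`, then `λ(t) ≤ k·coth(kt)` for all `t > 0`. -/
theorem gronwall_coth (k : ℝ) (hk : 0 < k) (lam : ℝ → ℝ)
    (hdiff : ∀ t ∈ Set.Ioi (0 : ℝ), DifferentiableAt ℝ lam t)
    (hineq : ∀ t ∈ Set.Ioi (0 : ℝ), deriv lam t + (lam t) ^ 2 - k ^ 2 ≤ 0)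
    (hlim : Filter.limsup (fun t => t * lam t) (𝓝[>] (0 : ℝ)) ≤ 1) :
    ∀ t ∈ Set.Ioi (0 : ℝ), lam t ≤ k * Real.cosh (k * t) / Real.sinh (k * t) :=
  gronwall_coth_general k hk lam hdiff hineq
end

section
/- Let A, B be real symmetric n×n matrices and K a real skew-symmetric n×n matrix satisfying the differential equation A'(t) + A(t)² + A(t)K − K A(t) + K² − B = 0, where K and B are constant in t. Let λ(t) denote the largest eigenvalue of A(t). If B − K² ≤ k² I (in the sense of symmetric matrices) for some k > 0, then at any point where λ is differentiable, λ'(t) + λ(t)² ≤ k². -/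
/-!
Fix `t` and a unit vector `v` maximizing `⟨A(t)v, v⟩`. Since `⟨A(s)v, v⟩ ≤ λ(s)` for all `s`,
with equality at `t`, the two functions touch at `t` and `λ'(t) = ⟨A'(t)v, v⟩`. Maximality makes
`λ(t) I - A(t)` positive semidefinite with `v` in the kernel of its quadratic form, so `v` is an
eigenvector: then `⟨A²v, v⟩ = λ²` and, `K` being skew, `⟨(AK - KA)v, v⟩ = 0`, leaving
`λ' + λ² = ⟨(B - K²)v, v⟩ ≤ k²`.
-/

open Matrix Filter Topology

namespace Matrix

variable {ι : Type*} [Fintype ι]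

def rayleighValues (M : Matrix ι ι ℝ) : Set ℝ :=
  {r : ℝ | ∃ v : ι → ℝ, (∑ i, (v i) ^ 2) = 1 ∧ r = M.mulVec v ⬝ᵥ v}

noncomputable def rayleighSup (M : Matrix ι ι ℝ) : ℝ :=
  sSup (rayleighValues M)

lemma sum_sq_eq_dotProduct_self (v : ι → ℝ) : ∑ i, v i ^ 2 = v ⬝ᵥ v := by
  simp only [dotProduct, sq]

lemma isCompact_sum_sq_eq_one : IsCompact {v : ι → ℝ | ∑ i, v i ^ 2 = 1} := by
  refine Metric.isCompact_of_isClosed_isBounded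
    (isClosed_eq (by fun_prop) continuous_const) ?_
  refine isBounded_iff_forall_norm_le.2 ⟨1, fun v hv => ?_⟩
  refine (pi_norm_le_iff_of_nonneg zero_le_one).2 fun i => ?_
  rw [Real.norm_eq_abs, ← sq_le_one_iff_abs_le_one, ← hv.out]
  exact Finset.single_le_sum (fun j _ => sq_nonneg (v j)) (Finset.mem_univ i)

lemma continuous_mulVec_dotProduct_self (M : Matrix ι ι ℝ) :
    Continuous fun v : ι → ℝ => M *ᵥ v ⬝ᵥ v :=
  (continuous_const.matrix_mulVec continuous_id).dotProduct continuous_id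

lemma bddAbove_rayleighValues (M : Matrix ι ι ℝ) : BddAbove (rayleighValues M) := by
  refine (isCompact_sum_sq_eq_one.image (continuous_mulVec_dotProduct_self M)).bddAbove.mono ?_
  rintro _ ⟨v, hv, rfl⟩
  exact ⟨v, hv, rfl⟩

lemma le_rayleighSup (M : Matrix ι ι ℝ) {v : ι → ℝ} (hv : ∑ i, v i ^ 2 = 1) :
    M *ᵥ v ⬝ᵥ v ≤ rayleighSup M :=
  le_csSup (bddAbove_rayleighValues M) ⟨v, hv, rfl⟩

lemma rayleighSup_of_isEmpty [IsEmpty ι] (M : Matrix ι ι ℝ) : rayleighSup M = 0 := by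
  simp [rayleighSup, rayleighValues]

lemma exists_rayleighSup_eq [Nonempty ι] (M : Matrix ι ι ℝ) :
    ∃ v : ι → ℝ, ∑ i, v i ^ 2 = 1 ∧ M *ᵥ v ⬝ᵥ v = rayleighSup M := by
  classical
  obtain ⟨v, hv, hmax⟩ := isCompact_sum_sq_eq_one.exists_isMaxOn
    ⟨Pi.single (Classical.arbitrary ι) 1, by simp [Pi.single_apply, ite_pow]⟩
    (continuous_mulVec_dotProduct_self M).continuousOn
  refine ⟨v, hv, le_antisymm (le_rayleighSup M hv) (csSup_le ⟨_, v, hv, rfl⟩ ?_)⟩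
  rintro _ ⟨u, hu, rfl⟩
  exact hmax hu

lemma dotProduct_mulVec_le_rayleighSup_mul (M : Matrix ι ι ℝ) (x : ι → ℝ) :
    M *ᵥ x ⬝ᵥ x ≤ rayleighSup M * (x ⬝ᵥ x) := by
  rcases eq_or_ne x 0 with rfl | hx
  · simp
  have hpos : 0 < x ⬝ᵥ x := by
    simpa using dotProduct_self_star_pos_iff.2 hx
  set c := √(x ⬝ᵥ x)
  have hunit : ∑ i, (c⁻¹ • x) i ^ 2 = 1 := by
    rw [sum_sq_eq_dotProduct_self, smul_dotProduct, dotProduct_smul, smul_smul, smul_eq_mul,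
      ← sq, inv_pow, Real.sq_sqrt hpos.le, inv_mul_cancel₀ hpos.ne']
  have := le_rayleighSup M hunit
  rw [mulVec_smul, smul_dotProduct, dotProduct_smul, smul_smul, smul_eq_mul, ← sq, inv_pow,
    Real.sq_sqrt hpos.le] at this
  rwa [inv_mul_le_iff₀ hpos, mul_comm] at this

lemma posSemidef_rayleighSup_smul_one_sub [DecidableEq ι] {M : Matrix ι ι ℝ} (hM : Mᵀ = M) :
    (rayleighSup M • 1 - M).PosSemidef := by
  refine .of_dotProduct_mulVec_nonneg ?_ fun x => ?_
  · simp [IsHermitian, conjTranspose_eq_transpose_of_trivial, hM]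
  · rw [star_trivial, sub_mulVec, smul_mulVec, one_mulVec, dotProduct_sub, dotProduct_smul,
      smul_eq_mul, sub_nonneg, dotProduct_comm x]
    exact dotProduct_mulVec_le_rayleighSup_mul M x

lemma mulVec_eq_rayleighSup_smul {M : Matrix ι ι ℝ} (hM : Mᵀ = M) {v : ι → ℝ}
    (hv : M *ᵥ v ⬝ᵥ v = rayleighSup M * (v ⬝ᵥ v)) : M *ᵥ v = rayleighSup M • v := by
  classical
  have := (posSemidef_rayleighSup_smul_one_sub hM).dotProduct_mulVec_zero_iff v
  rw [star_trivial, sub_mulVec, smul_mulVec, one_mulVec, dotProduct_sub, dotProduct_smul,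
      smul_eq_mul, dotProduct_comm v (M *ᵥ v), hv, sub_self, sub_eq_zero] at this
  exact (this.1 rfl).symm

lemma dotProduct_mulVec_self_eq_zero_of_transpose_eq_neg {K : Matrix ι ι ℝ} (hK : Kᵀ = -K)
    (v : ι → ℝ) : K *ᵥ v ⬝ᵥ v = 0 := by
  have : K *ᵥ v ⬝ᵥ v = -(K *ᵥ v ⬝ᵥ v) := by
    conv_lhs => rw [dotProduct_comm, dotProduct_mulVec, ← mulVec_transpose, hK, neg_mulVec,
      neg_dotProduct]
  linarith

lemma riccati_dotProduct_of_mulVec_eq_smul {A K : Matrix ι ι ℝ} (hA : Aᵀ = A) (hK : Kᵀ = -K)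
    {v : ι → ℝ} {μ : ℝ} (hv : A *ᵥ v = μ • v) :
    (A * A + A * K - K * A) *ᵥ v ⬝ᵥ v = μ ^ 2 * (v ⬝ᵥ v) := by
  have hKv := dotProduct_mulVec_self_eq_zero_of_transpose_eq_neg hK v
  have hAK : A *ᵥ (K *ᵥ v) ⬝ᵥ v = μ * (K *ᵥ v ⬝ᵥ v) := by
    rw [dotProduct_comm, dotProduct_mulVec, ← mulVec_transpose, hA, hv,
      smul_dotProduct, smul_eq_mul, dotProduct_comm]
  simp only [add_mulVec, sub_mulVec, add_dotProduct, sub_dotProduct, hAK, ← mulVec_mulVec, hv,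
    mulVec_smul, smul_dotProduct, smul_eq_mul, hKv]
  ring

lemma hasDerivAt_mulVec_dotProduct {A : ℝ → Matrix ι ι ℝ} {A' : Matrix ι ι ℝ} {t : ℝ}
    (hA : ∀ i j, HasDerivAt (fun s => A s i j) (A' i j) t) (v w : ι → ℝ) :
    HasDerivAt (fun s => A s *ᵥ v ⬝ᵥ w) (A' *ᵥ v ⬝ᵥ w) t := by
  simp only [dotProduct, mulVec]
  exact HasDerivAt.fun_sum fun i _ =>
    (HasDerivAt.fun_sum fun j _ => (hA i j).mul_const (v j)).mul_const (w i)

end Matrix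

lemma deriv_eq_of_eventually_le_of_eq {f g : ℝ → ℝ} {f' t : ℝ} (hf : HasDerivAt f f' t)
    (hg : DifferentiableAt ℝ g t) (hle : ∀ᶠ s in 𝓝 t, f s ≤ g s) (heq : f t = g t) :
    deriv g t = f' := by
  have hmin : IsLocalMin (g - f) t := by
    filter_upwards [hle] with s hs
    simpa [heq] using hs
  linarith [hmin.hasDerivAt_eq_zero (hg.hasDerivAt.sub hf)]

theorem matrix_riccati_eigenvalue_general (n : ℕ) (A : ℝ → Matrix (Fin n) (Fin n) ℝ)
    (K B : Matrix (Fin n) (Fin n) ℝ) (k : ℝ)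
    (hAsymm : ∀ t, (A t)ᵀ = A t) (hKskew : Kᵀ = -K)
    (hderiv : ∀ t i j, HasDerivAt (fun s => A s i j)
      (-(A t * A t + A t * K - K * A t + K * K - B) i j) t)
    (hB : ∀ v : Fin n → ℝ, (B - K * K).mulVec v ⬝ᵥ v ≤ k ^ 2 * (v ⬝ᵥ v))
    (lam : ℝ → ℝ)
    (hlam : ∀ t, lam t = sSup {r : ℝ | ∃ v : Fin n → ℝ,
      (∑ i, (v i) ^ 2) = 1 ∧ r = (A t).mulVec v ⬝ᵥ v}) :
    ∀ t, DifferentiableAt ℝ lam t → deriv lam t + (lam t) ^ 2 ≤ k ^ 2 := by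
  intro t hdiff
  obtain rfl : lam = fun s => rayleighSup (A s) := funext hlam
  rcases isEmpty_or_nonempty (Fin n) with hn | hn
  · simpa [rayleighSup_of_isEmpty] using sq_nonneg k
  obtain ⟨v, hv, hmax⟩ := exists_rayleighSup_eq (A t)
  have hvv : v ⬝ᵥ v = 1 := by rw [← sum_sq_eq_dotProduct_self, hv]
  have heig : A t *ᵥ v = rayleighSup (A t) • v :=
    mulVec_eq_rayleighSup_smul (hAsymm t) (by rw [hvv, mul_one, hmax])
  have hderiv_lam : deriv (fun s => rayleighSup (A s)) t =
      -(A t * A t + A t * K - K * A t + K * K - B) *ᵥ v ⬝ᵥ v :=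
    deriv_eq_of_eventually_le_of_eq (hasDerivAt_mulVec_dotProduct (hderiv t) v v) hdiff
      (.of_forall fun s => le_rayleighSup (A s) hv) hmax
  have hquad := riccati_dotProduct_of_mulVec_eq_smul (hAsymm t) hKskew heig
  have hBv := hB v
  rw [hderiv_lam]
  simp only [neg_mulVec, sub_mulVec, add_mulVec, neg_dotProduct, sub_dotProduct,
    add_dotProduct, hvv, mul_one] at hquad hBv ⊢
  linarith

/-- Matrix Riccati comparison: if symmetric `A(t)` solves
`A' + A² + AK − KA + K² − B = 0` with `K` skew-symmetric and `B` symmetric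
constant, and `B − K² ≤ k² I`, then the largest eigenvalue
`λ(t) = sup_{|v|=1} ⟨A(t)v, v⟩` satisfies `λ' + λ² ≤ k²` where differentiable. -/
theorem matrix_riccati_eigenvalue (n : ℕ) (A : ℝ → Matrix (Fin n) (Fin n) ℝ)
    (K B : Matrix (Fin n) (Fin n) ℝ) (k : ℝ) (hk : 0 < k)
    (hAsymm : ∀ t, (A t)ᵀ = A t) (hKskew : Kᵀ = -K) (hBsymm : Bᵀ = B)
    (hderiv : ∀ t i j, HasDerivAt (fun s => A s i j)
      (-(A t * A t + A t * K - K * A t + K * K - B) i j) t)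
    (hB : ∀ v : Fin n → ℝ, (B - K * K).mulVec v ⬝ᵥ v ≤ k ^ 2 * (v ⬝ᵥ v))
    (lam : ℝ → ℝ)
    (hlam : ∀ t, lam t = sSup {r : ℝ | ∃ v : Fin n → ℝ,
      (∑ i, (v i) ^ 2) = 1 ∧ r = (A t).mulVec v ⬝ᵥ v}) :
    ∀ t, DifferentiableAt ℝ lam t → deriv lam t + (lam t) ^ 2 ≤ k ^ 2 :=
  matrix_riccati_eigenvalue_general n A K B k hAsymm hKskew hderiv hB lam hlam
end
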